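/- arXiv:1810.09364 — 2 statements merged into one kernel-verified Lean document; each statement's English description precedes it below -/
import Mathlib

section
/- Let zˢ, zᵗ ∈ ℂ² be nonzero spinors with equal norms ⟨zˢ|zˢ⟩ = ⟨zᵗ|zᵗ⟩. Then the 2×2 matrix h = (|zᵗ]⟨zˢ| − |zᵗ⟩[zˢ|)/√(⟨zˢ|zˢ⟩⟨zᵗ|zᵗ⟩) is in SU(2), i.e. h†h = I and det h = 1, and it satisfies h|zˢ⟩ = |zᵗ]. -/
open Complex Matrix

/-- The dual spinor `|z] = (−z̄₁, z̄₀)`. -/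
noncomputable def ketDual (z : Fin 2 → ℂ) : Fin 2 → ℂ :=
  ![-(starRingEnd ℂ) (z 1), (starRingEnd ℂ) (z 0)]

/-- The dual bra `[z| = (−z₁, z₀)`. -/
def braDual (z : Fin 2 → ℂ) : Fin 2 → ℂ := ![-(z 1), z 0]

/-- The squared norm `⟨z|z⟩` of a spinor. -/
noncomputable def snorm (z : Fin 2 → ℂ) : ℝ := ∑ i, Complex.normSq (z i)

/-! Let `U z` be the matrix with columns `|z⟩` and `|z]`. Completeness of the pair `{|z⟩, |z]}`
gives `U zᴴ U z = U z U zᴴ = ⟨z|z⟩ I` and `det U z = ⟨z|z⟩`, and the numerator of `h` factors as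
`U zᵗ J U zˢᴴ` with `J = [[0, -1], [1, 0]] ∈ SU(2)`. So the numerator is `√(⟨zˢ|zˢ⟩⟨zᵗ|zᵗ⟩)`
times a matrix in SU(2), and since `U zˢᴴ |zˢ⟩ = (⟨zˢ|zˢ⟩, 0)` it sends `|zˢ⟩` to `⟨zˢ|zˢ⟩ |zᵗ]`,
which the normalisation turns into `|zᵗ]` because the two norms agree. -/

noncomputable def spinorFrame (z : Fin 2 → ℂ) : Matrix (Fin 2) (Fin 2) ℂ :=
  !![z 0, ketDual z 0; z 1, ketDual z 1]

lemma ofReal_snorm (z : Fin 2 → ℂ) :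
    (snorm z : ℂ) = star (z 0) * z 0 + star (z 1) * z 1 := by
  simp [snorm, Fin.sum_univ_two, Complex.normSq_eq_conj_mul_self]

lemma snorm_pos {z : Fin 2 → ℂ} (hz : z ≠ 0) : 0 < snorm z := by
  obtain ⟨i, hi⟩ := Function.ne_iff.mp hz
  exact lt_of_lt_of_le (Complex.normSq_pos.mpr hi)
    (Finset.single_le_sum (fun j _ => Complex.normSq_nonneg (z j)) (Finset.mem_univ i))

lemma conjTranspose_spinorFrame_mul_self (z : Fin 2 → ℂ) :
    (spinorFrame z)ᴴ * spinorFrame z = (snorm z : ℂ) • 1 := by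
  rw [ofReal_snorm]
  ext i j
  fin_cases i <;> fin_cases j <;>
    simp [spinorFrame, ketDual, mul_apply, Fin.sum_univ_two] <;> ring

lemma spinorFrame_mul_conjTranspose_self (z : Fin 2 → ℂ) :
    spinorFrame z * (spinorFrame z)ᴴ = (snorm z : ℂ) • 1 := by
  rw [ofReal_snorm]
  ext i j
  fin_cases i <;> fin_cases j <;>
    simp [spinorFrame, ketDual, mul_apply, Fin.sum_univ_two] <;> ring

lemma det_spinorFrame (z : Fin 2 → ℂ) : (spinorFrame z).det = snorm z := by
  rw [ofReal_snorm, spinorFrame, det_fin_two_of]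
  simp only [ketDual, cons_val_zero, cons_val_one, RCLike.star_def]
  ring

lemma conjTranspose_spinorFrame_mulVec_self (z : Fin 2 → ℂ) :
    (spinorFrame z)ᴴ *ᵥ z = ![(snorm z : ℂ), 0] := by
  rw [ofReal_snorm]
  ext i
  fin_cases i <;> simp [spinorFrame, ketDual, mulVec, dotProduct, Fin.sum_univ_two, mul_comm]

lemma spinorFrame_mulVec_zero_one (z : Fin 2 → ℂ) : spinorFrame z *ᵥ ![0, 1] = ketDual z := by
  ext i
  fin_cases i <;> simp [spinorFrame, mulVec, dotProduct, Fin.sum_univ_two]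

noncomputable def spinorTransport (zs zt : Fin 2 → ℂ) : Matrix (Fin 2) (Fin 2) ℂ :=
  spinorFrame zt * !![0, -1; 1, 0] * (spinorFrame zs)ᴴ

lemma of_ketDual_sub_of_braDual (zs zt : Fin 2 → ℂ) :
    of (fun i j => ketDual zt i * (starRingEnd ℂ) (zs j)) - of (fun i j => zt i * braDual zs j) =
      spinorTransport zs zt := by
  ext i j
  fin_cases i <;> fin_cases j <;>
    simp [spinorTransport, spinorFrame, ketDual, braDual, mul_apply, Fin.sum_univ_two] <;> ring

lemma conjTranspose_spinorTransport_mul_self (zs zt : Fin 2 → ℂ) :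
    (spinorTransport zs zt)ᴴ * spinorTransport zs zt = ((snorm zs * snorm zt : ℝ) : ℂ) • 1 := by
  have hJ : (!![0, -1; 1, 0] : Matrix (Fin 2) (Fin 2) ℂ)ᴴ * !![0, -1; 1, 0] = 1 := by
    ext i j
    fin_cases i <;> fin_cases j <;> simp [mul_apply, Fin.sum_univ_two]
  simp only [spinorTransport, conjTranspose_mul, conjTranspose_conjTranspose, Matrix.mul_assoc]
  rw [← Matrix.mul_assoc (spinorFrame zt)ᴴ, conjTranspose_spinorFrame_mul_self, Matrix.smul_mul,
    Matrix.one_mul, Matrix.mul_smul, ← Matrix.mul_assoc, hJ, Matrix.one_mul, Matrix.mul_smul,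
    spinorFrame_mul_conjTranspose_self, smul_smul, Complex.ofReal_mul, mul_comm]

lemma det_spinorTransport (zs zt : Fin 2 → ℂ) :
    (spinorTransport zs zt).det = ((snorm zs * snorm zt : ℝ) : ℂ) := by
  simp [spinorTransport, det_conjTranspose, det_spinorFrame, det_fin_two_of]
  ring

lemma spinorTransport_mulVec_self (zs zt : Fin 2 → ℂ) :
    spinorTransport zs zt *ᵥ zs = (snorm zs : ℂ) • ketDual zt := by
  rw [spinorTransport, ← mulVec_mulVec, conjTranspose_spinorFrame_mulVec_self, ← mulVec_mulVec,
    ← spinorFrame_mulVec_zero_one, ← mulVec_smul]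
  congr 1
  ext i
  fin_cases i <;> simp

/-- For nonzero spinors of equal norm, the matrix
`h = (|zᵗ]⟨zˢ| − |zᵗ⟩[zˢ|)/√(⟨zˢ|zˢ⟩⟨zᵗ|zᵗ⟩)` is in SU(2) and maps `|zˢ⟩` to `|zᵗ]`. -/
theorem spinor_holonomy_SU2 (zs zt : Fin 2 → ℂ) (hzs : zs ≠ 0) (hzt : zt ≠ 0)
    (hnorm : snorm zs = snorm zt) :
    let h : Matrix (Fin 2) (Fin 2) ℂ :=
      (Real.sqrt (snorm zs * snorm zt) : ℂ)⁻¹ •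
        (Matrix.of (fun i j => ketDual zt i * (starRingEnd ℂ) (zs j)) -
         Matrix.of (fun i j => zt i * braDual zs j))
    hᴴ * h = 1 ∧ h.det = 1 ∧ h.mulVec zs = ketDual zt := by
  intro h
  have hh : h = (Real.sqrt (snorm zs * snorm zt) : ℂ)⁻¹ • spinorTransport zs zt := by
    simp only [h, of_ketDual_sub_of_braDual]
  rw [hh]
  set r := Real.sqrt (snorm zs * snorm zt) with hr_def
  have hprod : 0 < snorm zs * snorm zt := mul_pos (snorm_pos hzs) (snorm_pos hzt)
  have hr : (r : ℂ) * r = ((snorm zs * snorm zt : ℝ) : ℂ) := by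
    rw [← Complex.ofReal_mul, Real.mul_self_sqrt hprod.le]
  have hr0 : (r : ℂ) * r ≠ 0 := by
    rw [hr]
    exact Complex.ofReal_ne_zero.mpr hprod.ne'
  refine ⟨?_, ?_, ?_⟩
  · rw [conjTranspose_smul, Matrix.smul_mul, Matrix.mul_smul,
      conjTranspose_spinorTransport_mul_self, smul_smul, smul_smul, ← hr, star_inv₀,
      Complex.star_def, Complex.conj_ofReal, ← mul_inv, inv_mul_cancel₀ hr0, one_smul]
  · rw [det_smul, det_spinorTransport, ← hr, Fintype.card_fin, inv_pow, sq, inv_mul_cancel₀ hr0]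
  · have hrs : r = snorm zs := by rw [hr_def, ← hnorm, Real.sqrt_mul_self (snorm_pos hzs).le]
    rw [smul_mulVec, spinorTransport_mulVec_self, smul_smul, ← hrs,
      inv_mul_cancel₀ (left_ne_zero_of_mul hr0), one_smul]
end

section
/- Let zˢ, zᵗ ∈ ℂ² be nonzero with ⟨zˢ|zˢ⟩ = ⟨zᵗ|zᵗ⟩, and let h = (|zᵗ]⟨zˢ| − |zᵗ⟩[zˢ|)/⟨zˢ|zˢ⟩ ∈ SU(2). Define Jˢ = ½⟨zˢ|σ|zˢ⟩ and Jᵗ = −½⟨zᵗ|σ|zᵗ⟩. Then h (Jˢ·σ) h⁻¹ = Jᵗ·σ, i.e. h transports the source flux vector to the target flux vector. -/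
open Complex Matrix

/-- The Pauli matrices. -/
noncomputable def pauli : Fin 3 → Matrix (Fin 2) (Fin 2) ℂ :=
  ![!![0, 1; 1, 0], !![0, -I; I, 0], !![1, 0; 0, -1]]

/-- `⟨z|M|z⟩ = Σ_{ij} z̄_i M_{ij} z_j`. -/
noncomputable def expect (M : Matrix (Fin 2) (Fin 2) ℂ) (z : Fin 2 → ℂ) : ℂ :=
  ∑ i, ∑ j, (starRingEnd ℂ) (z i) * M i j * z j

/-!
Conjugation by `h` only has to be understood on two orthogonal projectors. The flux matrix of
a spinor is `J·σ = ½(|z⟩⟨z| − |z][z|)` (Fierz identity, with `|z⟩⟨z| + |z][z| = ⟨z|z⟩`), and,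
as `⟨zˢ|zˢ⟩ = ⟨zᵗ|zᵗ⟩`, the holonomy satisfies `h|zˢ⟩ = |zᵗ]`, `h|zˢ] = −|zᵗ⟩`,
`[zᵗ|h = ⟨zˢ|`, `⟨zᵗ|h = −[zˢ|`. Hence `h (Jˢ·σ) = (Jᵗ·σ) h`, and the first two identities
together with completeness give `h hᴴ = 1`, so `h⁻¹ = hᴴ`.
-/

namespace Spinor

section spinor

variable (z : Fin 2 → ℂ)

lemma star_ketDual : star (ketDual z) = braDual z := by
  ext i; fin_cases i <;> simp [ketDual, braDual]

lemma star_braDual : star (braDual z) = ketDual z := by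
  ext i; fin_cases i <;> simp [ketDual, braDual]

lemma ofReal_snorm : (snorm z : ℂ) = star z ⬝ᵥ z := by
  simp [snorm, dotProduct, Fin.sum_univ_two, ← Complex.normSq_eq_conj_mul_self]

open ComplexOrder in
lemma ofReal_snorm_ne_zero {z : Fin 2 → ℂ} (hz : z ≠ 0) : (snorm z : ℂ) ≠ 0 := by
  rwa [ofReal_snorm, Ne, dotProduct_star_self_eq_zero]

lemma star_dotProduct_ketDual : star z ⬝ᵥ ketDual z = 0 := by
  simp [dotProduct, Fin.sum_univ_two, ketDual]; ring

lemma braDual_dotProduct_self : braDual z ⬝ᵥ z = 0 := by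
  simp [dotProduct, Fin.sum_univ_two, braDual]; ring

lemma braDual_dotProduct_ketDual : braDual z ⬝ᵥ ketDual z = snorm z := by
  rw [ofReal_snorm]; simp [dotProduct, Fin.sum_univ_two, ketDual, braDual]; ring

lemma vecMulVec_add_vecMulVec_ketDual :
    vecMulVec z (star z) + vecMulVec (ketDual z) (braDual z) = (snorm z : ℂ) • 1 := by
  rw [ofReal_snorm]
  ext i j
  fin_cases i <;> fin_cases j <;> simp [vecMulVec, dotProduct, Fin.sum_univ_two, ketDual, braDual] <;> ring

lemma sum_expect_smul_pauli :
    ∑ a, expect (pauli a) z • pauli a = vecMulVec z (star z) - vecMulVec (ketDual z) (braDual z) := by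
  ext i j
  fin_cases i <;> fin_cases j <;>
    simp [expect, pauli, Fin.sum_univ_two, Fin.sum_univ_three, vecMulVec, ketDual, braDual] <;>
    ring_nf <;> simp [Complex.I_sq] <;> ring

lemma conj_expect_pauli (a : Fin 3) : starRingEnd ℂ (expect (pauli a) z) = expect (pauli a) z := by
  fin_cases a <;> simp [expect, pauli, Fin.sum_univ_two] <;> ring

lemma sum_re_mul_expect_smul_pauli {c : ℂ} (hc : starRingEnd ℂ c = c) :
    ∑ a, ((c * expect (pauli a) z).re : ℂ) • pauli a = c • ∑ a, expect (pauli a) z • pauli a := by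
  have hre (a : Fin 3) : ((c * expect (pauli a) z).re : ℂ) = c * expect (pauli a) z := by
    rw [← Complex.conj_eq_iff_re, map_mul, hc, conj_expect_pauli]
  simp only [hre, Finset.smul_sum, smul_smul]

end spinor

noncomputable def holonomy (zs zt : Fin 2 → ℂ) : Matrix (Fin 2) (Fin 2) ℂ :=
  (snorm zs : ℂ)⁻¹ • (vecMulVec (ketDual zt) (star zs) - vecMulVec zt (braDual zs))

section holonomy

variable {zs zt : Fin 2 → ℂ}

lemma holonomy_mulVec_self (hzs : (snorm zs : ℂ) ≠ 0) : holonomy zs zt *ᵥ zs = ketDual zt := by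
  rw [holonomy, smul_mulVec, sub_mulVec, vecMulVec_mulVec, vecMulVec_mulVec, op_smul_eq_smul,
    op_smul_eq_smul, ← ofReal_snorm, braDual_dotProduct_self, zero_smul, sub_zero, inv_smul_smul₀ hzs]

lemma holonomy_mulVec_ketDual (hzs : (snorm zs : ℂ) ≠ 0) : holonomy zs zt *ᵥ ketDual zs = -zt := by
  rw [holonomy, smul_mulVec, sub_mulVec, vecMulVec_mulVec, vecMulVec_mulVec, op_smul_eq_smul,
    op_smul_eq_smul, star_dotProduct_ketDual, braDual_dotProduct_ketDual, zero_smul, zero_sub,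
    smul_neg, inv_smul_smul₀ hzs]

lemma braDual_vecMul_holonomy (hzs : (snorm zs : ℂ) ≠ 0) (hnorm : snorm zs = snorm zt) :
    braDual zt ᵥ* holonomy zs zt = star zs := by
  rw [holonomy, vecMul_smul, vecMul_sub, vecMul_vecMulVec, vecMul_vecMulVec,
    braDual_dotProduct_ketDual, braDual_dotProduct_self, zero_smul, sub_zero, ← hnorm,
    inv_smul_smul₀ hzs]

lemma star_vecMul_holonomy (hzs : (snorm zs : ℂ) ≠ 0) (hnorm : snorm zs = snorm zt) :
    star zt ᵥ* holonomy zs zt = -braDual zs := by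
  rw [holonomy, vecMul_smul, vecMul_sub, vecMul_vecMulVec, vecMul_vecMulVec,
    star_dotProduct_ketDual, ← ofReal_snorm, ← hnorm, zero_smul, zero_sub, smul_neg,
    inv_smul_smul₀ hzs]

lemma holonomy_mul_conjTranspose (hzs : (snorm zs : ℂ) ≠ 0) (hnorm : snorm zs = snorm zt) :
    holonomy zs zt * (holonomy zs zt)ᴴ = 1 := by
  have hconj : (holonomy zs zt)ᴴ =
      (snorm zs : ℂ)⁻¹ • (vecMulVec zs (braDual zt) - vecMulVec (ketDual zs) (star zt)) := by
    rw [holonomy, conjTranspose_smul, conjTranspose_sub, conjTranspose_vecMulVec,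
      conjTranspose_vecMulVec, star_star, star_ketDual, star_braDual, star_inv₀, Complex.star_def,
      Complex.conj_ofReal]
  rw [hconj, Matrix.mul_smul, Matrix.mul_sub, mul_vecMulVec, mul_vecMulVec,
    holonomy_mulVec_self hzs, holonomy_mulVec_ketDual hzs, neg_vecMulVec, sub_neg_eq_add,
    add_comm, vecMulVec_add_vecMulVec_ketDual, ← hnorm, inv_smul_smul₀ hzs]

lemma holonomy_mul_sum_expect_smul_pauli (hzs : (snorm zs : ℂ) ≠ 0) (hnorm : snorm zs = snorm zt) :
    holonomy zs zt * ∑ a, expect (pauli a) zs • pauli a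
      = -(∑ a, expect (pauli a) zt • pauli a) * holonomy zs zt := by
  rw [sum_expect_smul_pauli, sum_expect_smul_pauli, Matrix.mul_sub, Matrix.neg_mul, Matrix.sub_mul,
    mul_vecMulVec, mul_vecMulVec, vecMulVec_mul, vecMulVec_mul, holonomy_mulVec_self hzs,
    holonomy_mulVec_ketDual hzs, star_vecMul_holonomy hzs hnorm, braDual_vecMul_holonomy hzs hnorm,
    neg_vecMulVec, vecMulVec_neg]
  abel

end holonomy

end Spinor

open Spinor in
theorem spinor_holonomy_transports_flux_general (zs zt : Fin 2 → ℂ) (hzs : zs ≠ 0)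
    (hnorm : snorm zs = snorm zt) :
    let h : Matrix (Fin 2) (Fin 2) ℂ :=
      ((snorm zs : ℂ))⁻¹ •
        (Matrix.of (fun i j => ketDual zt i * (starRingEnd ℂ) (zs j)) -
         Matrix.of (fun i j => zt i * braDual zs j))
    let Js : Fin 3 → ℝ := fun a => ((1 / 2 : ℂ) * expect (pauli a) zs).re
    let Jt : Fin 3 → ℝ := fun a => (-(1 / 2 : ℂ) * expect (pauli a) zt).re
    h * (∑ a, (Js a : ℂ) • pauli a) * h⁻¹ = ∑ a, (Jt a : ℂ) • pauli a := by
  intro h Js Jt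
  have hN := ofReal_snorm_ne_zero hzs
  have hh : h = holonomy zs zt := rfl
  have hunit := holonomy_mul_conjTranspose hN hnorm
  rw [sum_re_mul_expect_smul_pauli zs (by norm_num [map_ofNat]),
    sum_re_mul_expect_smul_pauli zt (by norm_num [map_ofNat]), hh, Matrix.inv_eq_right_inv hunit,
    Matrix.mul_smul, holonomy_mul_sum_expect_smul_pauli hN hnorm, Matrix.smul_mul, Matrix.mul_assoc,
    hunit, Matrix.mul_one, smul_neg, neg_smul]

/-- The SU(2) holonomy `h = (|zᵗ]⟨zˢ| − |zᵗ⟩[zˢ|)/⟨zˢ|zˢ⟩` transports the source flux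
`Jˢ = ½⟨zˢ|σ|zˢ⟩` to the target flux `Jᵗ = −½⟨zᵗ|σ|zᵗ⟩`:
`h (Jˢ·σ) h⁻¹ = Jᵗ·σ`. -/
theorem spinor_holonomy_transports_flux (zs zt : Fin 2 → ℂ) (hzs : zs ≠ 0) (hzt : zt ≠ 0)
    (hnorm : snorm zs = snorm zt) :
    let h : Matrix (Fin 2) (Fin 2) ℂ :=
      ((snorm zs : ℂ))⁻¹ •
        (Matrix.of (fun i j => ketDual zt i * (starRingEnd ℂ) (zs j)) -
         Matrix.of (fun i j => zt i * braDual zs j))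
    let Js : Fin 3 → ℝ := fun a => ((1 / 2 : ℂ) * expect (pauli a) zs).re
    let Jt : Fin 3 → ℝ := fun a => (-(1 / 2 : ℂ) * expect (pauli a) zt).re
    h * (∑ a, (Js a : ℂ) • pauli a) * h⁻¹ = ∑ a, (Jt a : ℂ) • pauli a :=
  spinor_holonomy_transports_flux_general zs zt hzs hnorm
end
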